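/- An element h = a_0 e_0 + X_0 e_0E + Y_0 e_0F + c_0 e_0EF + a_1 e_1 + X_1 e_1E + Y_1 e_1F + c_1 e_1EF of H_1^i is invertible if and only if a_0 a_1 ≠ 0. -/
import Mathlib


noncomputable section


namespace Stmt18

def X (n : Fin 3) : FreeAlgebra ℂ (Fin 3) := FreeAlgebra.ι ℂ n

/-- Relations of `H_1^i`: `KE = -EK`, `KF = -FK`, `EF = FE`, `E² = 0`, `F² = 0`, `K² = 1`. -/
inductive rel : FreeAlgebra ℂ (Fin 3) → FreeAlgebra ℂ (Fin 3) → Prop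
  | ke : rel (X 0 * X 1) (-(X 1 * X 0))
  | kf : rel (X 0 * X 2) (-(X 2 * X 0))
  | ef : rel (X 1 * X 2) (X 2 * X 1)
  | e2 : rel (X 1 ^ 2) 0
  | f2 : rel (X 2 ^ 2) 0
  | k2 : rel (X 0 ^ 2) 1

/-- The algebra `H_1^i`. -/
abbrev H1 := RingQuot rel

def K : H1 := RingQuot.mkAlgHom ℂ rel (X 0)
def E : H1 := RingQuot.mkAlgHom ℂ rel (X 1)
def F : H1 := RingQuot.mkAlgHom ℂ rel (X 2)
def e0 : H1 := (2 : ℂ)⁻¹ • (1 + K)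
def e1 : H1 := (2 : ℂ)⁻¹ • (1 - K)

lemma KE : K * E = -(E * K) := by
  simpa [K, E, map_mul, map_neg] using RingQuot.mkAlgHom_rel ℂ rel.ke

lemma KF : K * F = -(F * K) := by
  simpa [K, F, map_mul, map_neg] using RingQuot.mkAlgHom_rel ℂ rel.kf

lemma EK : E * K = (-1 : ℂ) • (K * E) := by
  have h : E * K = -(K * E) := by rw [KE, neg_neg]
  rw [h]; exact (neg_one_smul ℂ (K * E)).symm

lemma FK : F * K = (-1 : ℂ) • (K * F) := by
  have h : F * K = -(K * F) := by rw [KF, neg_neg]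
  rw [h]; exact (neg_one_smul ℂ (K * F)).symm

lemma FE : F * E = E * F := by
  simpa [E, F, map_mul] using (RingQuot.mkAlgHom_rel ℂ rel.ef).symm

lemma EE : E * E = 0 := by
  simpa [E, map_mul, map_pow, sq] using RingQuot.mkAlgHom_rel ℂ rel.e2

lemma FF : F * F = 0 := by
  simpa [F, map_mul, map_pow, sq] using RingQuot.mkAlgHom_rel ℂ rel.f2

lemma KK : K * K = 1 := by
  simpa [K, map_mul, map_pow, sq] using RingQuot.mkAlgHom_rel ℂ rel.k2

lemma EK' (x : H1) : E * (K * x) = (-1 : ℂ) • (K * (E * x)) := by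
  rw [← mul_assoc, EK, smul_mul_assoc, mul_assoc]

lemma FK' (x : H1) : F * (K * x) = (-1 : ℂ) • (K * (F * x)) := by
  rw [← mul_assoc, FK, smul_mul_assoc, mul_assoc]

lemma FE' (x : H1) : F * (E * x) = E * (F * x) := by
  rw [← mul_assoc, FE, mul_assoc]

lemma EE' (x : H1) : E * (E * x) = 0 := by rw [← mul_assoc, EE, zero_mul]

lemma FF' (x : H1) : F * (F * x) = 0 := by rw [← mul_assoc, FF, zero_mul]

lemma KK' (x : H1) : K * (K * x) = x := by rw [← mul_assoc, KK, one_mul]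

/-- The quasi-inverse of `h`, scaled by `(a0*a1)^2` to clear denominators. -/
def ginv (a0 X0 Y0 c0 a1 X1 Y1 c1 : ℂ) : H1 :=
  (a0 * a1 ^ 2) • e0 + (-(X0 * a0 * a1)) • (e0 * E) + (-(Y0 * a0 * a1)) • (e0 * F) +
    (-(c0 * a1 ^ 2) + (X0 * Y1 + Y0 * X1) * a1) • (e0 * (E * F)) +
    (a0 ^ 2 * a1) • e1 + (-(X1 * a0 * a1)) • (e1 * E) + (-(Y1 * a0 * a1)) • (e1 * F) +
    (-(c1 * a0 ^ 2) + (X1 * Y0 + Y1 * X0) * a0) • (e1 * (E * F))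

set_option maxHeartbeats 4000000 in
lemma key_right (a0 X0 Y0 c0 a1 X1 Y1 c1 : ℂ) :
    (a0 • e0 + X0 • (e0 * E) + Y0 • (e0 * F) + c0 • (e0 * (E * F)) +
      a1 • e1 + X1 • (e1 * E) + Y1 • (e1 * F) + c1 • (e1 * (E * F))) *
      ginv a0 X0 Y0 c0 a1 X1 Y1 c1 = ((a0 * a1) ^ 2) • 1 := by
  simp only [ginv, e0, e1, smul_add, smul_sub, smul_smul, add_mul, mul_add, sub_mul, mul_sub,
    smul_mul_assoc, mul_smul_comm, mul_one, one_mul, mul_assoc,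
    EK, EK', FK, FK', FE, FE', EE, EE', FF, FF', KK, KK',
    smul_zero, mul_zero, zero_mul]
  module

set_option maxHeartbeats 4000000 in
lemma key_left (a0 X0 Y0 c0 a1 X1 Y1 c1 : ℂ) :
    ginv a0 X0 Y0 c0 a1 X1 Y1 c1 *
      (a0 • e0 + X0 • (e0 * E) + Y0 • (e0 * F) + c0 • (e0 * (E * F)) +
        a1 • e1 + X1 • (e1 * E) + Y1 • (e1 * F) + c1 • (e1 * (E * F))) =
      ((a0 * a1) ^ 2) • 1 := by
  simp only [ginv, e0, e1, smul_add, smul_sub, smul_smul, add_mul, mul_add, sub_mul, mul_sub,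
    smul_mul_assoc, mul_smul_comm, mul_one, one_mul, mul_assoc,
    EK, EK', FK, FK', FE, FE', EE, EE', FF, FF', KK, KK',
    smul_zero, mul_zero, zero_mul]
  module

/-- The character of `H1` sending `K ↦ s`, `E ↦ 0`, `F ↦ 0`, for `s * s = 1`. -/
def phi (s : ℂ) (hs : s * s = 1) : H1 →ₐ[ℂ] ℂ :=
  RingQuot.liftAlgHom ℂ ⟨FreeAlgebra.lift ℂ ![s, 0, 0], by
    intro x y h
    induction h <;>
      simp [X, FreeAlgebra.lift_ι_apply, Matrix.cons_val_zero, Matrix.cons_val_one, sq, hs]⟩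

lemma phi_K (s : ℂ) (hs : s * s = 1) : phi s hs K = s := by
  simp [phi, K, X, RingQuot.liftAlgHom_mkAlgHom_apply, FreeAlgebra.lift_ι_apply]

lemma phi_E (s : ℂ) (hs : s * s = 1) : phi s hs E = 0 := by
  simp [phi, E, X, RingQuot.liftAlgHom_mkAlgHom_apply, FreeAlgebra.lift_ι_apply]

lemma phi_F (s : ℂ) (hs : s * s = 1) : phi s hs F = 0 := by
  simp [phi, F, X, RingQuot.liftAlgHom_mkAlgHom_apply, FreeAlgebra.lift_ι_apply]

/-- An element `h = a₀e₀ + X₀e₀E + Y₀e₀F + c₀e₀EF + a₁e₁ + X₁e₁E + Y₁e₁F + c₁e₁EF`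
of `H_1^i` is invertible iff `a₀a₁ ≠ 0`. -/
theorem isUnit_iff (a0 X0 Y0 c0 a1 X1 Y1 c1 : ℂ) :
    IsUnit (a0 • e0 + X0 • (e0 * E) + Y0 • (e0 * F) + c0 • (e0 * (E * F)) +
            a1 • e1 + X1 • (e1 * E) + Y1 • (e1 * F) + c1 • (e1 * (E * F))) ↔
      a0 * a1 ≠ 0 := by
  constructor
  · intro hu
    have h0 := hu.map (phi 1 (by norm_num))
    have h1 := hu.map (phi (-1) (by norm_num))
    simp only [map_add, map_smul, map_mul, map_one, e0, e1, map_sub,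
      phi_K, phi_E, phi_F, smul_eq_mul, mul_zero, zero_mul, mul_one] at h0 h1
    norm_num at h0 h1
    exact mul_ne_zero h0 h1
  · intro hne
    set h := a0 • e0 + X0 • (e0 * E) + Y0 • (e0 * F) + c0 • (e0 * (E * F)) +
      a1 • e1 + X1 • (e1 * E) + Y1 • (e1 * F) + c1 • (e1 * (E * F)) with hdef
    have hc : ((a0 * a1) ^ 2 : ℂ) ≠ 0 := pow_ne_zero _ hne
    refine ⟨⟨h, ((a0 * a1) ^ 2)⁻¹ • ginv a0 X0 Y0 c0 a1 X1 Y1 c1, ?_, ?_⟩, rfl⟩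
    · rw [mul_smul_comm, key_right, smul_smul, inv_mul_cancel₀ hc, one_smul]
    · rw [smul_mul_assoc, key_left, smul_smul, inv_mul_cancel₀ hc, one_smul]

end Stmt18
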